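/- arXiv:q-alg/9701012 — 2 statements merged into one kernel-verified Lean document; each statement's English description precedes it below -/
import Mathlib

section
/- A codeword χ ∈ S^♮ satisfies χ_1 + χ_2 = 0 (i.e., χ is orthogonal to the weight-2 word (1,1,0,...,0)) if and only if χ_{2i-1} = χ_{2i} for every i = 1,...,24; that is, the subcode S_Λ = ⟨(1,1,0^46)⟩^⊥ ∩ S^♮ consists exactly of the codewords of S^♮ that are constant on each of the 24 pairs {2i-1, 2i}. -/
/-- The all-ones word `(1^16)`. -/
def w16All : Fin 16 → ZMod 2 := fun _ => 1

/-- The word `(0^8 1^8)`. -/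
def w16Half : Fin 16 → ZMod 2 := fun i => if 8 ≤ i.val then 1 else 0

/-- The word `(0^4 1^4 0^4 1^4)`. -/
def w16Quarter : Fin 16 → ZMod 2 := fun i => if 4 ≤ i.val % 8 then 1 else 0

/-- The word `(0^2 1^2)` repeated 4 times. -/
def w16Eighth : Fin 16 → ZMod 2 := fun i => if 2 ≤ i.val % 4 then 1 else 0

/-- The word `(01)` repeated 8 times. -/
def w16Alt : Fin 16 → ZMod 2 := fun i => if 1 ≤ i.val % 2 then 1 else 0

/-- The code `S_{E8}`: the binary linear code of length 16 spanned by
`(1^16)`, `(0^8 1^8)`, `(0^4 1^4 0^4 1^4)`, `((0^2 1^2)^4)` and `((01)^8)`. -/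
def SE8 : Submodule (ZMod 2) (Fin 16 → ZMod 2) :=
  Submodule.span (ZMod 2) {w16All, w16Half, w16Quarter, w16Eighth, w16Alt}

/-- The word of length 48 which is `1` exactly on the `b`-th block of 16
coordinates (so `blockOnes 0 = (1^16,0^16,0^16)` etc.). -/
def blockOnes (b : ℕ) : Fin 48 → ZMod 2 := fun j => if j.val / 16 = b then 1 else 0

/-- The length-48 word `(α, α, α)` repeating a length-16 word `α` on each of the
three blocks. -/
def tripleRep (α : Fin 16 → ZMod 2) : Fin 48 → ZMod 2 :=
  fun j => α ⟨j.val % 16, Nat.mod_lt _ (by norm_num)⟩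

/-- The moonshine code `S^♮`: the binary linear code of length 48 spanned by
`(1^16,0^16,0^16)`, `(0^16,1^16,0^16)`, `(0^16,0^16,1^16)` and all `(α,α,α)`
with `α ∈ S_{E8}`. -/
def Snat : Submodule (ZMod 2) (Fin 48 → ZMod 2) :=
  Submodule.span (ZMod 2)
    ({blockOnes 0, blockOnes 1, blockOnes 2} ∪ {w | ∃ α ∈ SE8, w = tripleRep α})


/-! Every generator of `S^♮`, hence every codeword, has the same sum `χ (2i) + χ (2i+1)` on all
24 coordinate pairs. In characteristic 2 a pair sum vanishes exactly when the word is constant on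
that pair, so `χ 0 + χ 1 = 0` forces every pair sum to vanish. For `(α, α, α)` the pair sums are
those of `α`; among the generators of `S_{E8}` and the block words only `(01)^8` is not constant on
pairs, and its pair sums are all `1`. -/

section PairSums

variable {R : Type*} [Semiring R] {n : ℕ}

def pairSum (i : Fin n) : (Fin (2 * n) → R) →ₗ[R] R :=
  LinearMap.proj ⟨2 * i, by omega⟩ + LinearMap.proj ⟨2 * i + 1, by omega⟩

theorem pairSum_apply (i : Fin n) (χ : Fin (2 * n) → R) :
    pairSum i χ = χ ⟨2 * i, by omega⟩ + χ ⟨2 * i + 1, by omega⟩ :=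
  rfl

variable (R n) in
def equalPairSums : Submodule R (Fin (2 * n) → R) where
  carrier := {χ | ∀ i j, pairSum i χ = pairSum j χ}
  zero_mem' := by simp
  add_mem' := fun ha hb i j => by simp only [map_add, ha i j, hb i j]
  smul_mem' := fun c χ hχ i j => by simp only [map_smul, hχ i j]

theorem mem_equalPairSums {χ : Fin (2 * n) → R} :
    χ ∈ equalPairSums R n ↔ ∀ i j, pairSum i χ = pairSum j χ :=
  Iff.rfl

theorem pairSum_eq_zero_iff [CharP R 2] (i : Fin n) (χ : Fin (2 * n) → R) :
    pairSum i χ = 0 ↔ χ ⟨2 * i, by omega⟩ = χ ⟨2 * i + 1, by omega⟩ := by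
  rw [pairSum_apply]
  refine ⟨fun h => ?_, fun h => by rw [h, CharTwo.add_self_eq_zero]⟩
  simpa only [h, add_zero] using
    CharTwo.add_cancel_left (χ ⟨2 * i, by omega⟩) (χ ⟨2 * i + 1, by omega⟩)

theorem mem_equalPairSums_of_pairwise_eq [CharP R 2] {χ : Fin (2 * n) → R}
    (hχ : ∀ i : Fin n, χ ⟨2 * i, by omega⟩ = χ ⟨2 * i + 1, by omega⟩) :
    χ ∈ equalPairSums R n := fun i j => by
  rw [(pairSum_eq_zero_iff i χ).2 (hχ i), (pairSum_eq_zero_iff j χ).2 (hχ j)]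

end PairSums

theorem SE8_le_equalPairSums : SE8 ≤ equalPairSums (ZMod 2) 8 := by
  rw [SE8, Submodule.span_le]
  rintro w (rfl | rfl | rfl | rfl | rfl) <;> exact mem_equalPairSums.2 (by decide)

theorem blockOnes_mem_equalPairSums (b : ℕ) : blockOnes b ∈ equalPairSums (ZMod 2) 24 :=
  mem_equalPairSums_of_pairwise_eq fun i => by
    simp only [blockOnes, show (2 * i.val + 1) / 16 = 2 * i.val / 16 by omega]

theorem pairSum_tripleRep (α : Fin 16 → ZMod 2) (i : Fin 24) :
    pairSum i (tripleRep α) = pairSum (⟨i % 8, by omega⟩ : Fin 8) α := by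
  simp only [pairSum_apply, tripleRep, show 2 * i.val % 16 = 2 * (i.val % 8) by omega,
    show (2 * i.val + 1) % 16 = 2 * (i.val % 8) + 1 by omega]

theorem tripleRep_mem_equalPairSums {α : Fin 16 → ZMod 2} (hα : α ∈ equalPairSums (ZMod 2) 8) :
    tripleRep α ∈ equalPairSums (ZMod 2) 24 := fun i j => by
  rw [pairSum_tripleRep, pairSum_tripleRep]
  exact hα _ _

theorem Snat_le_equalPairSums : Snat ≤ equalPairSums (ZMod 2) 24 := by
  rw [Snat, Submodule.span_le]
  rintro w ((rfl | rfl | rfl) | ⟨α, hα, rfl⟩)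
  iterate 3 exact blockOnes_mem_equalPairSums _
  exact tripleRep_mem_equalPairSums (SE8_le_equalPairSums hα)

/-- A codeword `χ ∈ S^♮` satisfies `χ₁ + χ₂ = 0` (i.e. `χ` is orthogonal to the
weight-2 word `(1,1,0,…,0)`) if and only if `χ` is constant on each of the 24
pairs `{2i-1, 2i}` of coordinates; hence `S_Λ = ⟨(1,1,0^46)⟩^⊥ ∩ S^♮` consists
exactly of the codewords of `S^♮` that are constant on each pair. -/
theorem Snat_pair_constant_iff (χ : Fin 48 → ZMod 2) (hχ : χ ∈ Snat) :
    χ 0 + χ 1 = 0 ↔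
      ∀ i : Fin 24, χ ⟨2 * i.val, by omega⟩ = χ ⟨2 * i.val + 1, by omega⟩ := by
  have hsums : ∀ i j : Fin 24, pairSum i χ = pairSum j χ := Snat_le_equalPairSums hχ
  simp only [← pairSum_eq_zero_iff]
  exact ⟨fun h0 i => (hsums i 0).trans h0, fun h => h 0⟩
end

section
/- Every codeword χ ∈ S^♮ with χ_1 + χ_2 = 1 (i.e., not orthogonal to the weight-2 word (1,1,0,...,0)) has Hamming weight exactly 24, and there are exactly 64 such codewords. -/
set_option maxRecDepth 10000
set_option maxHeartbeats 2000000

/-- A 7-element spanning family for `S^♮`. -/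
def v7 : Fin 7 → (Fin 48 → ZMod 2) :=
  ![blockOnes 0, blockOnes 1, blockOnes 2, tripleRep w16Half, tripleRep w16Quarter,
    tripleRep w16Eighth, tripleRep w16Alt]

/-- Linear combinations of the family `v7`. -/
def L7 (c : Fin 7 → ZMod 2) : Fin 48 → ZMod 2 := ∑ i, c i • v7 i

/-- `tripleRep` as a linear map. -/
def tripleRepL : (Fin 16 → ZMod 2) →ₗ[ZMod 2] (Fin 48 → ZMod 2) :=
  LinearMap.funLeft (ZMod 2) (ZMod 2)
    (fun j : Fin 48 => (⟨j.val % 16, Nat.mod_lt _ (by norm_num)⟩ : Fin 16))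

lemma tripleRepL_apply (α : Fin 16 → ZMod 2) : tripleRepL α = tripleRep α := rfl

lemma tripleRep_all : tripleRep w16All = v7 0 + v7 1 + v7 2 := by decide

lemma Snat_eq_span : Snat = Submodule.span (ZMod 2) (Set.range v7) := by
  apply le_antisymm
  · rw [Snat, Submodule.span_le]
    rintro w (h | ⟨α, hα, rfl⟩)
    · apply Submodule.subset_span
      rcases h with h | h | h <;> subst h
      exacts [⟨0, rfl⟩, ⟨1, rfl⟩, ⟨2, rfl⟩]
    · rw [← tripleRepL_apply]
      have : tripleRepL α ∈ Submodule.map tripleRepL SE8 := ⟨α, hα, rfl⟩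
      rw [SE8, Submodule.map_span] at this
      refine Submodule.span_le.2 ?_ this
      rintro _ ⟨β, hβ, rfl⟩
      rcases hβ with h | h | h | h | h <;> subst h <;> rw [tripleRepL_apply]
      · rw [tripleRep_all]
        exact add_mem (add_mem (Submodule.subset_span ⟨0, rfl⟩)
          (Submodule.subset_span ⟨1, rfl⟩)) (Submodule.subset_span ⟨2, rfl⟩)
      exacts [Submodule.subset_span ⟨3, rfl⟩, Submodule.subset_span ⟨4, rfl⟩,
        Submodule.subset_span ⟨5, rfl⟩, Submodule.subset_span ⟨6, rfl⟩]
  · rw [Submodule.span_le]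
    rintro _ ⟨i, rfl⟩
    have hmem : ∀ β ∈ ({w16All, w16Half, w16Quarter, w16Eighth, w16Alt} :
        Set (Fin 16 → ZMod 2)), tripleRep β ∈ Snat := fun β hβ =>
      Submodule.subset_span (Or.inr ⟨β, Submodule.subset_span hβ, rfl⟩)
    fin_cases i
    · exact Submodule.subset_span (Or.inl (Or.inl rfl))
    · exact Submodule.subset_span (Or.inl (Or.inr (Or.inl rfl)))
    · exact Submodule.subset_span (Or.inl (Or.inr (Or.inr rfl)))
    · exact hmem w16Half (by simp)
    · exact hmem w16Quarter (by simp)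
    · exact hmem w16Eighth (by simp)
    · exact hmem w16Alt (by simp)

lemma mem_Snat_iff (χ : Fin 48 → ZMod 2) : χ ∈ Snat ↔ ∃ c, L7 c = χ := by
  rw [Snat_eq_span, Submodule.mem_span_range_iff_exists_fun]
  rfl

lemma L7_ker : ∀ c : Fin 7 → ZMod 2, L7 c = 0 → c = 0 := by decide

lemma L7_inj : Function.Injective L7 := by
  intro c d h
  have hsub : L7 (c - d) = 0 := by
    simp only [L7, Pi.sub_apply, sub_smul, Finset.sum_sub_distrib] at *
    rw [h, sub_self]
  have := L7_ker _ hsub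
  rwa [sub_eq_zero] at this

lemma L7_weight : ∀ c : Fin 7 → ZMod 2, L7 c 0 + L7 c 1 = 1 → hammingNorm (L7 c) = 24 := by
  decide

/-- Every codeword `χ ∈ S^♮` with `χ₁ + χ₂ = 1` (i.e. not orthogonal to the
weight-2 word `(1,1,0,…,0)`) has Hamming weight exactly 24, and there are
exactly 64 such codewords. -/
theorem Snat_nonorthogonal_weight_24 :
    (∀ χ ∈ Snat, χ 0 + χ 1 = 1 → hammingNorm χ = 24) ∧
    {χ | χ ∈ Snat ∧ χ 0 + χ 1 = 1}.ncard = 64 := by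
  constructor
  · intro χ hχ h
    obtain ⟨c, rfl⟩ := (mem_Snat_iff χ).1 hχ
    exact L7_weight c h
  · have hset : {χ | χ ∈ Snat ∧ χ 0 + χ 1 = 1}
        = L7 '' {c | L7 c 0 + L7 c 1 = 1} := by
      ext χ
      simp only [Set.mem_setOf_eq, Set.mem_image, mem_Snat_iff]
      constructor
      · rintro ⟨⟨c, rfl⟩, h⟩; exact ⟨c, h, rfl⟩
      · rintro ⟨c, h, rfl⟩; exact ⟨⟨c, rfl⟩, h⟩
    rw [hset, Set.ncard_image_of_injective _ L7_inj, Set.ncard_eq_toFinset_card']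
    rfl
end
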